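/- Let m > 0, ω > 0, and h ∈ ℝ. Define the modified Hamiltonian H̃(q, p; h) = p²/(2m) + (mω²q²/2)·(1 − h²ω²/4). Then the velocity-Verlet map exactly conserves H̃: for every (q, p) ∈ ℝ², if (q', p') = M_VV(h) · (q, p), then H̃(q', p'; h) = H̃(q, p; h). -/

import Mathlib

open Matrix

/-- The velocity-Verlet transition matrix for the harmonic oscillator. -/
noncomputable def MVV (m ω h : ℝ) : Matrix (Fin 2) (Fin 2) ℝ :=
  !![1 - h ^ 2 * ω ^ 2 / 2, h / m;
     -h * m * ω ^ 2 * (1 - h ^ 2 * ω ^ 2 / 4), 1 - h ^ 2 * ω ^ 2 / 2]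

/-!
The velocity-Verlet matrix has the shape `!![a, b; c, a]` with `a² - bc = 1`: it is symplectic,
and its equal diagonal entries express time reversibility. Such a matrix preserves the diagonal
quadratic form `α p² + β q²` as soon as `α c + β b = 0`, since the cross terms then cancel and the
squares are rescaled by the determinant. For Verlet, `b = h/m` and `c = -h m ω² (1 - h²ω²/4)`, so
the weights `α = 1/(2m)` and `β = m ω² (1 - h²ω²/4) / 2` of the modified Hamiltonian qualify.
-/

def diagQuadForm {R : Type*} [CommRing R] (α β : R) (v : Fin 2 → R) : R :=
  α * v 1 ^ 2 + β * v 0 ^ 2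

theorem diagQuadForm_mulVec {R : Type*} [CommRing R] {a b c α β : R}
    (hdet : a ^ 2 - b * c = 1) (hweights : α * c + β * b = 0) (v : Fin 2 → R) :
    diagQuadForm α β (!![a, b; c, a] *ᵥ v) = diagQuadForm α β v := by
  simp only [diagQuadForm, mulVec, dotProduct, Fin.sum_univ_two, of_apply, cons_val', cons_val_zero,
    cons_val_one, empty_val', cons_val_fin_one]
  linear_combination (β * v 0 ^ 2 + α * v 1 ^ 2) * hdet +
    (c * v 0 ^ 2 + 2 * a * v 0 * v 1 + b * v 1 ^ 2) * hweights

theorem velocity_verlet_conserves_modified_energy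
    (m ω h : ℝ) (hm : 0 < m) :
    ∀ q p : ℝ,
      ((MVV m ω h).mulVec ![q, p] 1) ^ 2 / (2 * m) +
        m * ω ^ 2 * ((MVV m ω h).mulVec ![q, p] 0) ^ 2 / 2 * (1 - h ^ 2 * ω ^ 2 / 4) =
      p ^ 2 / (2 * m) + m * ω ^ 2 * q ^ 2 / 2 * (1 - h ^ 2 * ω ^ 2 / 4) := by
  intro q p
  have hm₀ : m ≠ 0 := hm.ne'
  have hdet :
      (1 - h ^ 2 * ω ^ 2 / 2) ^ 2 - h / m * (-h * m * ω ^ 2 * (1 - h ^ 2 * ω ^ 2 / 4)) = 1 := by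
    field_simp
    ring
  have hweights : (2 * m)⁻¹ * (-h * m * ω ^ 2 * (1 - h ^ 2 * ω ^ 2 / 4)) +
      m * ω ^ 2 / 2 * (1 - h ^ 2 * ω ^ 2 / 4) * (h / m) = 0 := by
    field_simp
    ring
  have hconserved := diagQuadForm_mulVec hdet hweights ![q, p]
  simp only [diagQuadForm, cons_val_zero, cons_val_one] at hconserved
  rw [MVV]
  convert hconserved using 1 <;> ring
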